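/- Let $S = K[x_1,\ldots,x_n]$ and let $I \subset S$ be an $\mathfrak{m}$-primary lexsegment ideal with $t = \min\{j > 0 : x_{n-1}^j \in I\}$ (where $n \ge 2$). Suppose $\dim_K (S/I)_t \le 2$. Then $x_{n-1}^2 x_n^{j-2} \in I$ for all $j \ge \max(t, 2)$, and the multiplication map $(S/I)_{j-k} \to (S/I)_j$, $f \mapsto x_n^k f$, is surjective for all $j \ge t$ and $1 \le k < j$. -/
import Mathlib


open MvPolynomial

variable {K : Type*} [Field K] {n : ℕ}

/-- The total degree of an exponent vector. -/
def mdeg {n : ℕ} (m : Fin n →₀ ℕ) : ℕ := m.sum fun _ e => e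

/-- `I` is a monomial ideal: it contains every monomial of each of its elements. -/
def IsMonomialIdeal (I : Ideal (MvPolynomial (Fin n) K)) : Prop :=
  ∀ f ∈ I, ∀ m ∈ f.support, (monomial m (1 : K)) ∈ I

/-- `I` is stable: for every monomial `u ∈ I` with largest dividing variable `x_k`,
and every `i ≤ k`, the monomial `(x_i / x_k) * u` lies in `I`. -/
def IsStableIdeal (I : Ideal (MvPolynomial (Fin n) K)) : Prop :=
  ∀ m : Fin n →₀ ℕ, (monomial m (1 : K)) ∈ I →
    ∀ k i : Fin n, m k ≠ 0 → (∀ k', k < k' → m k' = 0) → i ≤ k →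
      (monomial (m + Finsupp.single i 1 - Finsupp.single k 1) (1 : K)) ∈ I

/-- `I` is strongly stable: for every monomial `u ∈ I`, every variable `x_k` dividing `u`
and every `i ≤ k`, the monomial `(x_i / x_k) * u` lies in `I`. -/
def IsStronglyStableIdeal (I : Ideal (MvPolynomial (Fin n) K)) : Prop :=
  ∀ m : Fin n →₀ ℕ, (monomial m (1 : K)) ∈ I →
    ∀ k i : Fin n, m k ≠ 0 → i ≤ k →
      (monomial (m + Finsupp.single i 1 - Finsupp.single k 1) (1 : K)) ∈ I

/-- `v <_lex u` for exponent vectors, lex order with `x_1 > x_2 > ⋯ > x_n`. -/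
def lexLt {n : ℕ} (v u : Fin n →₀ ℕ) : Prop :=
  ∃ i : Fin n, (∀ j < i, v j = u j) ∧ v i < u i

/-- `I` is a lexsegment ideal. -/
def IsLexsegmentIdeal (I : Ideal (MvPolynomial (Fin n) K)) : Prop :=
  IsMonomialIdeal I ∧
    ∀ u v : Fin n →₀ ℕ, (monomial u (1 : K)) ∈ I → mdeg v = mdeg u → lexLt u v →
      (monomial v (1 : K)) ∈ I

/-- The degree `j` piece of `S/I`, as the image of the degree `j` homogeneous polynomials. -/
noncomputable def Qpiece (I : Ideal (MvPolynomial (Fin n) K)) (j : ℕ) :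
    Submodule K (MvPolynomial (Fin n) K ⧸ I) :=
  (homogeneousSubmodule (Fin n) K j).map (Ideal.Quotient.mkₐ K I).toLinearMap

/-- Multiplication by `g` maps `(S/I)_j` injectively (to `(S/I)_{j'}`). -/
def QInj (I : Ideal (MvPolynomial (Fin n) K)) (g : MvPolynomial (Fin n) K)
    (j _j' : ℕ) : Prop :=
  ∀ f₁ ∈ Qpiece I j, ∀ f₂ ∈ Qpiece I j,
    Ideal.Quotient.mk I g * f₁ = Ideal.Quotient.mk I g * f₂ → f₁ = f₂

/-- Multiplication by `g` maps `(S/I)_j` onto `(S/I)_{j'}`. -/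
def QSurj (I : Ideal (MvPolynomial (Fin n) K)) (g : MvPolynomial (Fin n) K)
    (j j' : ℕ) : Prop :=
  ∀ h ∈ Qpiece I j', ∃ f ∈ Qpiece I j, Ideal.Quotient.mk I g * f = h

/-- Multiplication by `g` from `(S/I)_j` to `(S/I)_{j'}` has maximal rank. -/
def MulMaxRank (I : Ideal (MvPolynomial (Fin n) K)) (g : MvPolynomial (Fin n) K)
    (j j' : ℕ) : Prop :=
  QInj I g j j' ∨ QSurj I g j j'


section Aux

lemma mdeg_eq_degree {n : ℕ} (m : Fin n →₀ ℕ) : mdeg m = m.degree := rfl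

lemma mdeg_single {n : ℕ} (i : Fin n) (c : ℕ) : mdeg (Finsupp.single i c) = c :=
  Finsupp.sum_single_index rfl

lemma mdeg_add {n : ℕ} (u v : Fin n →₀ ℕ) : mdeg (u + v) = mdeg u + mdeg v :=
  Finsupp.sum_add_index' (fun _ => rfl) (fun _ _ _ => rfl)

lemma monomial_mem_hs (m : Fin n →₀ ℕ) (r : K) :
    monomial m r ∈ homogeneousSubmodule (Fin n) K (mdeg m) :=
  isHomogeneous_monomial r (by rw [mdeg_eq_degree])

lemma mdeg_of_mem_support {j : ℕ} {f : MvPolynomial (Fin n) K}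
    (hf : f ∈ homogeneousSubmodule (Fin n) K j) {m : Fin n →₀ ℕ} (hm : m ∈ f.support) :
    mdeg m = j := by
  have := hf (mem_support_iff.mp hm)
  rw [mdeg_eq_degree, Finsupp.degree_eq_weight_one]
  exact this

lemma three_smallest {n : ℕ} (a b : Fin n) (hab : a < b)
    (htop : ∀ i : Fin n, i = a ∨ i = b ∨ i < a)
    {j : ℕ} (hj : 2 ≤ j) (m : Fin n →₀ ℕ) (hm : mdeg m = j) :
    m = Finsupp.single b j ∨
    m = Finsupp.single a 1 + Finsupp.single b (j - 1) ∨
    m = Finsupp.single a 2 + Finsupp.single b (j - 2) ∨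
    lexLt (Finsupp.single a 2 + Finsupp.single b (j - 2)) m := by
  classical
  set w := Finsupp.single a 2 + Finsupp.single b (j - 2) with hw
  have hwi : ∀ i : Fin n, i < a → w i = 0 := by
    intro i hi
    have h1 : a ≠ i := (ne_of_lt hi).symm
    have h2 : b ≠ i := (ne_of_lt (hi.trans hab)).symm
    simp [hw, Finsupp.single_apply, h1, h2]
  by_cases hlow : ∀ i : Fin n, i < a → m i = 0
  · have hm2 : m = Finsupp.single a (m a) + Finsupp.single b (m b) := by
      ext i
      rcases htop i with rfl | rfl | hi
      · simp [Finsupp.single_apply, hab.ne, hab.ne']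
      · simp [Finsupp.single_apply, hab.ne, hab.ne']
      · have h1 : a ≠ i := (ne_of_lt hi).symm
        have h2 : b ≠ i := (ne_of_lt (hi.trans hab)).symm
        simp [Finsupp.single_apply, h1, h2, hlow i hi]
    have hsum : m a + m b = j := by
      rw [hm2, mdeg_add, mdeg_single, mdeg_single] at hm; exact hm
    have hcase : m a = 0 ∨ m a = 1 ∨ m a = 2 ∨ 3 ≤ m a := by omega
    rcases hcase with h | h | h | h
    · left
      have hb : m b = j := by omega
      rw [hm2, h, hb, Finsupp.single_zero, zero_add]
    · right; left
      have hb : m b = j - 1 := by omega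
      rw [hm2, h, hb]
    · right; right; left
      have hb : m b = j - 2 := by omega
      rw [hm2, h, hb]
    · right; right; right
      refine ⟨a, fun jj hjj => by rw [hwi jj hjj, hlow jj hjj], ?_⟩
      have hwa : w a = 2 := by
        simp [hw, Finsupp.add_apply, Finsupp.single_apply, hab.ne']
      omega
  · push_neg at hlow
    obtain ⟨i, hia, hi0⟩ := hlow
    have hS : (m.support.filter (fun i => i < a)).Nonempty :=
      ⟨i, Finset.mem_filter.mpr ⟨Finsupp.mem_support_iff.mpr hi0, hia⟩⟩
    set i₀ := (m.support.filter (fun i => i < a)).min' hS with hi₀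
    have hi₀mem := (m.support.filter (fun i => i < a)).min'_mem hS
    rw [Finset.mem_filter] at hi₀mem
    right; right; right
    refine ⟨i₀, ?_, ?_⟩
    · intro jj hjj
      have hja : jj < a := hjj.trans hi₀mem.2
      rw [hwi jj hja]
      by_contra hne
      have : jj ∈ m.support.filter (fun i => i < a) :=
        Finset.mem_filter.mpr ⟨Finsupp.mem_support_iff.mpr (fun h => hne h.symm), hja⟩
      exact absurd (Finset.min'_le _ _ this) (not_le.mpr hjj)
    · rw [hwi i₀ hi₀mem.2]
      exact Nat.pos_of_ne_zero (Finsupp.mem_support_iff.mp hi₀mem.1)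

lemma three_li (I : Ideal (MvPolynomial (Fin n) K))
    (hmon : IsMonomialIdeal I)
    (hfd : FiniteDimensional K (MvPolynomial (Fin n) K ⧸ I))
    (t : ℕ) (M : Fin 3 → (Fin n →₀ ℕ)) (hinj : Function.Injective M)
    (hd : ∀ i, mdeg (M i) = t)
    (hni : ∀ i, monomial (M i) (1 : K) ∉ I) :
    3 ≤ Module.finrank K (Qpiece I t) := by
  classical
  set v : Fin 3 → (MvPolynomial (Fin n) K ⧸ I) :=
    fun i => Ideal.Quotient.mk I (monomial (M i) (1 : K)) with hv
  have hmem : ∀ i, v i ∈ Qpiece I t := by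
    intro i
    exact ⟨monomial (M i) 1, by rw [← hd i]; exact monomial_mem_hs _ _, rfl⟩
  have hli : LinearIndependent K v := by
    rw [Fintype.linearIndependent_iff]
    intro g hg
    set p : MvPolynomial (Fin n) K := ∑ l, monomial (M l) (g l) with hp
    have hmkp : Ideal.Quotient.mk I p = 0 := by
      rw [← hg, hp, ← Ideal.Quotient.mkₐ_eq_mk K I, map_sum]
      refine Finset.sum_congr rfl fun l _ => ?_
      have h1 : monomial (M l) (g l) = g l • monomial (M l) (1 : K) := by
        rw [smul_monomial, smul_eq_mul, mul_one]
      rw [hv, h1, map_smul, Ideal.Quotient.mkₐ_eq_mk]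
    have hpI : p ∈ I := (Ideal.Quotient.eq_zero_iff_mem).mp hmkp
    intro i
    by_contra hgi
    have hcoeff : coeff (M i) p = g i := by
      rw [hp, coeff_sum]
      rw [Finset.sum_eq_single i]
      · rw [coeff_monomial, if_pos rfl]
      · intro l _ hl
        rw [coeff_monomial, if_neg (fun h => hl (hinj h))]
      · intro h; exact absurd (Finset.mem_univ i) h
    have hsupp : M i ∈ p.support := mem_support_iff.mpr (by rw [hcoeff]; exact hgi)
    exact hni i (hmon p hpI (M i) hsupp)
  have hli' : LinearIndependent K (fun i => (⟨v i, hmem i⟩ : Qpiece I t)) :=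
    LinearIndependent.of_comp (Qpiece I t).subtype hli
  have := hli'.fintype_card_le_finrank
  simpa using this

end Aux

set_option maxHeartbeats 1000000 in
/-- Let `I` be an `𝔪`-primary lexsegment ideal (`n ≥ 2`),
`t = min{j > 0 : x_{n-1}^j ∈ I}`, and suppose `dim_K (S/I)_t ≤ 2`. Then
`x_{n-1}² x_n^{j-2} ∈ I` for all `j ≥ max(t,2)`, and multiplication by `x_n^k` from
`(S/I)_{j-k}` to `(S/I)_j` is surjective for all `j ≥ t` and `1 ≤ k < j`. -/
theorem stmt_17 (hn : 2 ≤ n) (I : Ideal (MvPolynomial (Fin n) K))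
    (hlex : IsLexsegmentIdeal I)
    (hfd : FiniteDimensional K (MvPolynomial (Fin n) K ⧸ I))
    (t : ℕ)
    (ht : IsLeast {j : ℕ | 0 < j ∧
        (X (⟨n - 2, by omega⟩ : Fin n) : MvPolynomial (Fin n) K) ^ j ∈ I} t)
    (hdim : Module.finrank K (Qpiece I t) ≤ 2) :
    (∀ j : ℕ, max t 2 ≤ j →
        (X (⟨n - 2, by omega⟩ : Fin n) : MvPolynomial (Fin n) K) ^ 2 *
          X (⟨n - 1, by omega⟩ : Fin n) ^ (j - 2) ∈ I) ∧
    ∀ j k : ℕ, t ≤ j → 1 ≤ k → k < j →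
      QSurj I ((X (⟨n - 1, by omega⟩ : Fin n) : MvPolynomial (Fin n) K) ^ k) (j - k) j := by
  classical
  obtain ⟨⟨htpos, htI⟩, htmin⟩ := ht
  obtain ⟨hmon, hlseg⟩ := hlex
  set a : Fin n := ⟨n - 2, by omega⟩ with ha
  set b : Fin n := ⟨n - 1, by omega⟩ with hb
  have hab : a < b := by rw [Fin.lt_def]; simp only [ha, hb]; omega
  have htop : ∀ i : Fin n, i = a ∨ i = b ∨ i < a := by
    intro i
    have hi := i.isLt
    rcases Nat.lt_or_ge i.val (n - 2) with h | h
    · exact Or.inr (Or.inr h)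
    · rcases Nat.eq_or_lt_of_le h with h' | h'
      · exact Or.inl (Fin.ext h'.symm)
      · right; left; apply Fin.ext; simp only [hb]; omega
  set t' := max t 2 with ht'
  have hkey : ∀ j : ℕ, t' ≤ j →
      monomial (Finsupp.single a 2 + Finsupp.single b (j - 2)) (1 : K) ∈ I := by
    have hbase : monomial (Finsupp.single a 2 + Finsupp.single b (t' - 2)) (1 : K) ∈ I := by
      rcases Nat.lt_or_ge t 2 with h2 | h2
      · have ht1 : t = 1 := by omega
        have hXa : (X a : MvPolynomial (Fin n) K) ∈ I := by
          have h := htI; rw [ht1, pow_one] at h; exact h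
        have ht'2 : t' = 2 := by omega
        rw [ht'2]
        simp only [Nat.sub_self, Finsupp.single_zero, add_zero]
        rw [← X_pow_eq_monomial, pow_two]
        exact I.mul_mem_left _ hXa
      · have ht't : t' = t := by omega
        rw [ht't]
        by_contra h2'
        have hmdegw : mdeg (Finsupp.single a 2 + Finsupp.single b (t - 2)) = t := by
          rw [mdeg_add, mdeg_single, mdeg_single]; omega
        have hzlow : ∀ jj : Fin n, jj < a →
            ((Finsupp.single a (2:ℕ) + Finsupp.single b (t - 2)) jj = 0 ∧
             (Finsupp.single a (1:ℕ) + Finsupp.single b (t - 1)) jj = 0 ∧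
             (Finsupp.single b (t:ℕ)) jj = 0) := by
          intro jj hjj
          have h1 : a ≠ jj := (ne_of_lt hjj).symm
          have hql : b ≠ jj := (ne_of_lt (hjj.trans hab)).symm
          refine ⟨?_, ?_, ?_⟩ <;> simp [Finsupp.single_apply, h1, hql]
        have hlt1 : lexLt (Finsupp.single a 1 + Finsupp.single b (t - 1))
            (Finsupp.single a 2 + Finsupp.single b (t - 2)) := by
          refine ⟨a, fun jj hjj => by
            rw [(hzlow jj hjj).2.1, (hzlow jj hjj).1], ?_⟩
          simp [Finsupp.add_apply, Finsupp.single_apply, hab.ne']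
        have hlt0 : lexLt (Finsupp.single b t)
            (Finsupp.single a 2 + Finsupp.single b (t - 2)) := by
          refine ⟨a, fun jj hjj => by
            rw [(hzlow jj hjj).2.2, (hzlow jj hjj).1], ?_⟩
          simp [Finsupp.add_apply, Finsupp.single_apply, hab.ne']
        have hn1 : monomial (Finsupp.single a 1 + Finsupp.single b (t - 1)) (1 : K) ∉ I :=
          fun h => h2' (hlseg _ _ h
            (by rw [hmdegw, mdeg_add, mdeg_single, mdeg_single]; omega) hlt1)
        have hn0 : monomial (Finsupp.single b t) (1 : K) ∉ I :=
          fun h => h2' (hlseg _ _ h (by rw [hmdegw, mdeg_single]) hlt0)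
        have hMa : ∀ i : Fin 3,
            (![Finsupp.single b t, Finsupp.single a 1 + Finsupp.single b (t - 1),
              Finsupp.single a 2 + Finsupp.single b (t - 2)] i) a = (i : ℕ) := by
          intro i
          fin_cases i
          · show (Finsupp.single b t) a = 0
            simp [Finsupp.single_apply, hab.ne']
          · show ((Finsupp.single a 1 + Finsupp.single b (t - 1) : Fin n →₀ ℕ)) a = 1
            simp [Finsupp.add_apply, Finsupp.single_apply, hab.ne']
          · show ((Finsupp.single a 2 + Finsupp.single b (t - 2) : Fin n →₀ ℕ)) a = 2
            simp [Finsupp.add_apply, Finsupp.single_apply, hab.ne']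
        have hinj : Function.Injective
            ![Finsupp.single b t, Finsupp.single a 1 + Finsupp.single b (t - 1),
              Finsupp.single a 2 + Finsupp.single b (t - 2)] := by
          intro i l h
          have h3 := congrArg (fun u : Fin n →₀ ℕ => u a) h
          simp only [hMa] at h3
          exact Fin.val_injective h3
        have hd : ∀ i : Fin 3,
            mdeg (![Finsupp.single b t, Finsupp.single a 1 + Finsupp.single b (t - 1),
              Finsupp.single a 2 + Finsupp.single b (t - 2)] i) = t := by
          intro i
          fin_cases i
          · show mdeg (Finsupp.single b t) = t
            rw [mdeg_single]
          · show mdeg (Finsupp.single a 1 + Finsupp.single b (t - 1)) = t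
            rw [mdeg_add, mdeg_single, mdeg_single]; omega
          · show mdeg (Finsupp.single a 2 + Finsupp.single b (t - 2)) = t
            exact hmdegw
        have hni : ∀ i : Fin 3,
            monomial (![Finsupp.single b t, Finsupp.single a 1 + Finsupp.single b (t - 1),
              Finsupp.single a 2 + Finsupp.single b (t - 2)] i) (1 : K) ∉ I := by
          intro i
          fin_cases i
          · exact hn0
          · exact hn1
          · exact h2'
        
        have h3 := three_li I hmon hfd t _ hinj hd hni
        omega
    intro j hj
    have heq : (Finsupp.single a 2 + Finsupp.single b (t' - 2)) + Finsupp.single b (j - t')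
        = Finsupp.single a 2 + Finsupp.single b (j - 2) := by
      rw [add_assoc, ← Finsupp.single_add]
      have : t' - 2 + (j - t') = j - 2 := by omega
      rw [this]
    have hmul : monomial (Finsupp.single a 2 + Finsupp.single b (j - 2)) (1 : K)
        = monomial (Finsupp.single a 2 + Finsupp.single b (t' - 2)) 1 *
          monomial (Finsupp.single b (j - t')) 1 := by
      rw [monomial_mul, one_mul, heq]
    rw [hmul]
    exact I.mul_mem_right _ hbase
  constructor
  · intro j hj
    have h1 : (X a : MvPolynomial (Fin n) K) ^ 2 * X b ^ (j - 2)
        = monomial (Finsupp.single a 2 + Finsupp.single b (j - 2)) 1 := by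
      rw [X_pow_eq_monomial, X_pow_eq_monomial, monomial_mul, one_mul]
    rw [h1]
    exact hkey j hj
  · intro j k htj hk1 hkj
    have hj2 : 2 ≤ j := by omega
    have hIj : monomial (Finsupp.single a 2 + Finsupp.single b (j - 2)) (1 : K) ∈ I :=
      hkey j (by omega)
    intro h hmemh
    obtain ⟨f, hf, rfl⟩ := hmemh
    set T : Submodule K (MvPolynomial (Fin n) K ⧸ I) :=
      { carrier := {h | ∃ g ∈ Qpiece I (j - k), Ideal.Quotient.mk I (X b ^ k) * g = h}
        add_mem' := by
          rintro x y ⟨g1, hg1, rfl⟩ ⟨g2, hg2, rfl⟩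
          exact ⟨g1 + g2, (Qpiece I (j - k)).add_mem hg1 hg2, mul_add _ _ _⟩
        zero_mem' := ⟨0, (Qpiece I (j - k)).zero_mem, mul_zero _⟩
        smul_mem' := by
          rintro r x ⟨g, hg, rfl⟩
          exact ⟨r • g, (Qpiece I (j - k)).smul_mem r hg, mul_smul_comm r _ _⟩ } with hT
    suffices hsuff : (Ideal.Quotient.mkₐ K I).toLinearMap f ∈ T by
      obtain ⟨g, hg, hgeq⟩ := hsuff
      exact ⟨g, hg, hgeq⟩
    have hfs : (Ideal.Quotient.mkₐ K I).toLinearMap f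
        = ∑ m ∈ f.support, coeff m f • Ideal.Quotient.mk I (monomial m (1 : K)) := by
      conv_lhs => rw [as_sum f]
      rw [map_sum]
      refine Finset.sum_congr rfl fun m _ => ?_
      have h1 : monomial m (coeff m f) = coeff m f • monomial m (1 : K) := by
        rw [smul_monomial, smul_eq_mul, mul_one]
      rw [h1, map_smul]
      rfl
    rw [hfs]
    refine T.sum_mem fun m hm => T.smul_mem _ ?_
    by_cases hmi : monomial m (1 : K) ∈ I
    · rw [Ideal.Quotient.eq_zero_iff_mem.mpr hmi]
      exact T.zero_mem
    · have hdm : mdeg m = j := mdeg_of_mem_support hf hm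
      have hmb : k ≤ m b := by
        rcases three_smallest a b hab htop hj2 m hdm with h0 | h1 | h2 | hlt
        · rw [h0]; simp [Finsupp.single_apply]; omega
        · rw [h1]; simp [Finsupp.add_apply, Finsupp.single_apply, hab.ne']; omega
        · exact absurd (h2 ▸ hIj) hmi
        · exact absurd (hlseg _ _ hIj
            (by rw [hdm, mdeg_add, mdeg_single, mdeg_single]; omega) hlt) hmi
      set m' := m - Finsupp.single b k with hm'
      have hle : Finsupp.single b k ≤ m := Finsupp.single_le_iff.mpr hmb
      have hadd : m' + Finsupp.single b k = m := tsub_add_cancel_of_le hle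
      have hdm' : mdeg m' = j - k := by
        have h4 := congrArg mdeg hadd
        rw [mdeg_add, mdeg_single, hdm] at h4
        omega
      refine ⟨Ideal.Quotient.mk I (monomial m' (1 : K)),
        ⟨monomial m' 1, by rw [← hdm']; exact monomial_mem_hs _ _, rfl⟩, ?_⟩
      rw [← map_mul, X_pow_eq_monomial, monomial_mul, one_mul]
      have h5 : Finsupp.single b k + m' = m := by rw [add_comm]; exact hadd
      rw [h5]
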